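/- For every complex y with Re(y) > 0, the function F_0(y) = 1 − √π · e^{y²} · y · erfc(y) satisfies |F_0(y)| < 1, where erfc(y) = (2/√π)∫_y^∞ e^{−u²} du along a ray in the right half plane. -/

import Mathlib

/-!
Multiplying `erfc y` by `e^{y²}` turns its integrand into `K(t) = e^{-2yt-t²}`, so
`√π e^{y²} y erfc y = 2y ∫₀^∞ K`. Since `(2y + 2t) K = -K'` has integral `K(0) = 1`,
`F₀(y) = ∫₀^∞ 2t K(t) dt`. Now `|K(t)| = e^{-2at-t²}` with `a = Re y`, so `|F₀(y)| ≤ F₀(a)`,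
and the same identity for the real `a` gives `F₀(a) = 1 - 2a ∫₀^∞ e^{-2at-t²} dt < 1`.
-/

open MeasureTheory Real Complex

/-- The complementary error function along a ray in the right half plane:
`erfc(y) = (2/√π)∫₀^∞ e^{-(y+t)²} dt`. -/
noncomputable def erfcC (y : ℂ) : ℂ :=
  (2 / (Real.sqrt π : ℂ)) * ∫ t in Set.Ioi (0 : ℝ), Complex.exp (-(y + t) ^ 2)

open Filter Set Topology

/-- `e^{y²} e^{-(y+t)²}`. -/
noncomputable def erfcKernel (y : ℂ) (t : ℝ) : ℂ :=
  cexp (-(2 * y * t) - t ^ 2)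

lemma continuous_erfcKernel (y : ℂ) : Continuous (erfcKernel y) := by
  unfold erfcKernel
  fun_prop

lemma norm_erfcKernel (y : ℂ) (t : ℝ) :
    ‖erfcKernel y t‖ = rexp (-(2 * y.re * t) - t ^ 2) := by
  simp [erfcKernel, Complex.norm_exp, ← ofReal_pow]

lemma erfcKernel_ofReal (a t : ℝ) :
    erfcKernel a t = (rexp (-(2 * a * t) - t ^ 2) : ℂ) := by
  simp [erfcKernel]

lemma norm_erfcKernel_le {y : ℂ} (hy : 0 ≤ y.re) {t : ℝ} (ht : 0 ≤ t) :
    ‖erfcKernel y t‖ ≤ rexp (-1 * t ^ 2) := by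
  rw [norm_erfcKernel]
  gcongr
  nlinarith

lemma integrableOn_erfcKernel {y : ℂ} (hy : 0 ≤ y.re) :
    IntegrableOn (erfcKernel y) (Ioi 0) :=
  (integrable_exp_neg_mul_sq one_pos).integrableOn.mono'
    (continuous_erfcKernel y).aestronglyMeasurable.restrict
    ((ae_restrict_mem measurableSet_Ioi).mono fun _ ht ↦ norm_erfcKernel_le hy (le_of_lt ht))

lemma integrableOn_mul_erfcKernel {y : ℂ} (hy : 0 ≤ y.re) :
    IntegrableOn (fun t : ℝ ↦ (t : ℂ) * erfcKernel y t) (Ioi 0) := by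
  refine (integrable_mul_exp_neg_mul_sq one_pos).integrableOn.mono'
    (continuous_ofReal.mul (continuous_erfcKernel y)).aestronglyMeasurable.restrict ?_
  filter_upwards [ae_restrict_mem measurableSet_Ioi] with t (ht : 0 < t)
  rw [norm_mul, norm_real, norm_of_nonneg ht.le]
  exact mul_le_mul_of_nonneg_left (norm_erfcKernel_le hy ht.le) ht.le

lemma hasDerivAt_erfcKernel (y : ℂ) (t : ℝ) :
    HasDerivAt (erfcKernel y) (-((2 * y + 2 * t) * erfcKernel y t)) t := by
  have h : HasDerivAt (fun z : ℂ ↦ -(2 * y * z) - z ^ 2) (-(2 * y) - 2 * t) t :=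
    (((hasDerivAt_id (t : ℂ)).const_mul (2 * y)).neg.sub (hasDerivAt_pow 2 (t : ℂ))).congr_deriv
      (by simp)
  exact h.cexp.comp_ofReal.congr_deriv (by simp only [erfcKernel]; ring)

lemma integral_mul_erfcKernel {y : ℂ} (hy : 0 ≤ y.re) :
    ∫ t in Ioi (0 : ℝ), 2 * t * erfcKernel y t =
      1 - 2 * y * ∫ t in Ioi (0 : ℝ), erfcKernel y t := by
  have hderiv (t : ℝ) : HasDerivAt (-erfcKernel y) ((2 * y + 2 * t) * erfcKernel y t) t := by
    simpa only [neg_neg] using (hasDerivAt_erfcKernel y t).neg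
  have hint : IntegrableOn (fun t : ℝ ↦ (2 * y + 2 * t) * erfcKernel y t) (Ioi 0) := by
    refine IntegrableOn.congr_fun (((integrableOn_erfcKernel hy).const_mul (2 * y)).add
      ((integrableOn_mul_erfcKernel hy).const_mul 2)) (fun t _ ↦ ?_) measurableSet_Ioi
    simp only [Pi.add_apply]
    ring
  have hlim : Tendsto (-erfcKernel y) atTop (𝓝 0) :=
    tendsto_zero_of_hasDerivAt_of_integrableOn_Ioi (a := 0) (fun t _ ↦ hderiv t) hint
      (integrableOn_erfcKernel hy).neg
  have hone : ∫ t in Ioi (0 : ℝ), (2 * y + 2 * t) * erfcKernel y t = 1 := by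
    rw [integral_Ioi_of_hasDerivAt_of_tendsto' (fun t _ ↦ hderiv t) hint hlim]
    simp [erfcKernel]
  rw [← hone, ← integral_const_mul, ← integral_sub hint ((integrableOn_erfcKernel hy).const_mul _)]
  congr 1 with t
  ring

lemma sqrt_pi_mul_exp_sq_mul_erfcC (y : ℂ) :
    (Real.sqrt π : ℂ) * cexp (y ^ 2) * y * erfcC y =
      2 * y * ∫ t in Ioi (0 : ℝ), erfcKernel y t := by
  have hπ : (Real.sqrt π : ℂ) ≠ 0 := ofReal_ne_zero.mpr (Real.sqrt_pos.mpr pi_pos).ne'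
  have hkernel (t : ℝ) : cexp (y ^ 2) * cexp (-(y + t) ^ 2) = erfcKernel y t := by
    rw [← Complex.exp_add, erfcKernel]
    ring_nf
  simp_rw [erfcC, ← hkernel, integral_const_mul]
  field_simp

lemma integral_mul_exp_neg_two_mul_sub_sq_lt_one {a : ℝ} (ha : 0 < a) :
    ∫ t in Ioi (0 : ℝ), 2 * t * rexp (-(2 * a * t) - t ^ 2) < 1 := by
  have ha' : 0 ≤ (a : ℂ).re := by simpa using ha.le
  have hint := (integrableOn_erfcKernel ha').norm
  simp only [norm_erfcKernel, ofReal_re] at hint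
  have : NeZero (volume.restrict (Ioi (0 : ℝ))) := ⟨by simp⟩
  have hpos : 0 < ∫ t in Ioi (0 : ℝ), rexp (-(2 * a * t) - t ^ 2) := integral_exp_pos hint
  have h := integral_mul_erfcKernel ha'
  simp only [erfcKernel_ofReal] at h
  norm_cast at h
  rw [h]
  nlinarith

/-- For every complex `y` with `Re y > 0`, the mixing correction factor
`F₀(y) = 1 - √π e^{y²} y erfc(y)` satisfies `|F₀(y)| < 1`. -/
theorem abs_F_zero_lt_one (y : ℂ) (hy : 0 < y.re) :
    ‖1 - (Real.sqrt π : ℂ) * Complex.exp (y ^ 2) * y * erfcC y‖ < 1 := by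
  rw [sqrt_pi_mul_exp_sq_mul_erfcC, ← integral_mul_erfcKernel hy.le]
  calc ‖∫ t in Ioi (0 : ℝ), 2 * t * erfcKernel y t‖
      ≤ ∫ t in Ioi (0 : ℝ), ‖2 * t * erfcKernel y t‖ := norm_integral_le_integral_norm _
    _ = ∫ t in Ioi (0 : ℝ), 2 * t * rexp (-(2 * y.re * t) - t ^ 2) := by
        refine setIntegral_congr_fun measurableSet_Ioi fun t (ht : 0 < t) ↦ ?_
        simp [norm_erfcKernel, abs_of_pos ht]
    _ < 1 := integral_mul_exp_neg_two_mul_sub_sq_lt_one hy
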